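/- arXiv:2504.20688 — 8 statements merged into one kernel-verified Lean document; each statement's English description precedes it below -/
import Mathlib

section
/- A proper numerical set R with small elements 0 = r₀ < r₁ < ... < rₙ is a numerical semigroup if and only if G_i(R) ⊆ G₀(R) for all 0 ≤ i ≤ n-1, equivalently the union of all G_i(R) over 0 ≤ i ≤ n-1 equals G(R). -/
open Set

/-- A numerical set: contains 0 and has finite complement in ℕ. -/
def IsNumericalSet (R : Set ℕ) : Prop := 0 ∈ R ∧ Rᶜ.Finite

/-- A proper numerical set: a numerical set different from ℕ₀. -/
def ProperNumericalSet (R : Set ℕ) : Prop := 0 ∈ R ∧ Rᶜ.Finite ∧ Rᶜ.Nonempty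

/-- The set of gaps of a numerical set. -/
def gaps (R : Set ℕ) : Set ℕ := Rᶜ

/-- The genus: the number of gaps. -/
noncomputable def genus (R : Set ℕ) : ℕ := Rᶜ.ncard

/-- The Frobenius number: the largest gap (for a proper numerical set). -/
noncomputable def frob (R : Set ℕ) : ℕ := sSup Rᶜ

/-- The nsCond: F(R)+1 for a proper numerical set, and 0 for ℕ₀. -/
noncomputable def nsCond (R : Set ℕ) : ℕ := by
  classical exact if Rᶜ = ∅ then 0 else frob R + 1

/-- The dual numerical set: for 0 ≤ x ≤ F(R), x ∈ R* iff F(R)-x ∉ R,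
together with all integers > F(R). -/
def dual (R : Set ℕ) : Set ℕ := {x | frob R < x ∨ frob R - x ∉ R}

/-- Symmetry: for every 0 ≤ a ≤ F(R), exactly one of a, F(R)-a belongs to R. -/
def IsSymmetric (R : Set ℕ) : Prop := ∀ a ≤ frob R, (a ∈ R ↔ frob R - a ∉ R)

/-- Bonded sum: left elements of R, then F(R) = c(R)-1, then S shifted up by c(R)-1. -/
def bsum (R S : Set ℕ) : Set ℕ := (R ∩ Iio (nsCond R)) ∪ ((· + (nsCond R - 1)) '' S)

/-- End-to-end sum: small elements of R, then S shifted up by c(R). -/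
def esum (R S : Set ℕ) : Set ℕ := (R ∩ Iio (nsCond R)) ∪ ((· + nsCond R) '' S)

/-- Conjoint sum: left elements of R, then the nonzero part of S shifted up by c(R)-1. -/
def csum (R S : Set ℕ) : Set ℕ := (R ∩ Iio (nsCond R)) ∪ ((· + (nsCond R - 1)) '' (S \ {0}))

/-- The numerical set R - r obtained by subtracting r from all elements of R that are ≥ r. -/
def shiftDown (R : Set ℕ) (r : ℕ) : Set ℕ := {x | x + r ∈ R}

/-- Hook set of the column corresponding to a left element r of R. -/
def hookSet (R : Set ℕ) (r : ℕ) : Set ℕ := gaps (shiftDown R r)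

/-- Pseudo-Frobenius numbers. -/
def PF (R : Set ℕ) : Set ℕ := {z | z ∉ R ∧ ∀ r ∈ R, r ≠ 0 → z + r ∈ R}

/-- The type of a numerical semigroup. -/
noncomputable def typ (R : Set ℕ) : ℕ := (PF R).ncard

/-- A numerical semigroup: a numerical set closed under addition. -/
def IsNumericalSemigroup (R : Set ℕ) : Prop :=
  IsNumericalSet R ∧ ∀ x ∈ R, ∀ y ∈ R, x + y ∈ R

/-- Almost symmetric numerical semigroup: 2g(R) = F(R) + t(R). -/
def AlmostSymmetric (R : Set ℕ) : Prop := 2 * genus R = frob R + typ R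

theorem stmt_5 (R : Set ℕ) (hR : ProperNumericalSet R) :
    ((∀ x ∈ R, ∀ y ∈ R, x + y ∈ R) ↔
      ∀ r ∈ R, r < nsCond R → hookSet R r ⊆ gaps R) ∧
    ((∀ x ∈ R, ∀ y ∈ R, x + y ∈ R) ↔
      (⋃ r ∈ {r ∈ R | r < nsCond R}, hookSet R r) = gaps R) := by
  obtain ⟨h0, hfin, hne⟩ := hR
  have hcomp : Rᶜ ≠ ∅ := hne.ne_empty
  have hns : nsCond R = frob R + 1 := by simp [nsCond, hcomp]
  have hbig : ∀ x, frob R < x → x ∈ R := by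
    intro x hx
    by_contra hxR
    exact absurd (le_csSup (hfin.bddAbove) hxR) (not_le.mpr hx)
  -- forward direction of first iff
  have fwd : (∀ x ∈ R, ∀ y ∈ R, x + y ∈ R) →
      ∀ r ∈ R, r < nsCond R → hookSet R r ⊆ gaps R := by
    intro hcl r hr _ x hx
    intro hxR
    exact hx (hcl x hxR r hr)
  have bwd : (∀ r ∈ R, r < nsCond R → hookSet R r ⊆ gaps R) →
      ∀ x ∈ R, ∀ y ∈ R, x + y ∈ R := by
    intro h x hx y hy
    by_cases hlt : x < nsCond R
    · by_contra hxy
      have : y ∈ hookSet R x := by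
        simpa [hookSet, gaps, shiftDown, add_comm] using hxy
      exact (h x hx hlt this) hy
    · apply hbig
      have : frob R < x := by omega
      omega
  constructor
  · exact ⟨fwd, bwd⟩
  constructor
  · intro hcl
    apply Set.Subset.antisymm
    · intro x hx
      simp only [Set.mem_iUnion, Set.mem_setOf_eq] at hx
      obtain ⟨r, ⟨hr, hrlt⟩, hxr⟩ := hx
      exact fwd hcl r hr hrlt hxr
    · intro x hx
      simp only [Set.mem_iUnion, Set.mem_setOf_eq]
      refine ⟨0, ⟨h0, by omega⟩, ?_⟩
      simpa [hookSet, gaps, shiftDown] using hx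
  · intro heq
    apply bwd
    intro r hr hrlt x hx
    rw [← heq]
    simp only [Set.mem_iUnion, Set.mem_setOf_eq]
    exact ⟨r, ⟨hr, hrlt⟩, hx⟩
end

section
/- Let R and S be proper numerical sets with gap sets G(R) = {a₁ < ... < a_g} and G(S) = {b₁ < ... < b_k}. Then the bonded sum satisfies G(R ⊞_B S) = {a₁, ..., a_{g-1}, a_g + b₁, ..., a_g + b_k} and F(R ⊞_B S) = a_g + b_k. -/
open Set

theorem stmt_6 (R S : Set ℕ) (hR : ProperNumericalSet R) (hS : ProperNumericalSet S) :
    gaps (bsum R S) = (gaps R \ {frob R}) ∪ ((frob R + ·) '' gaps S) ∧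
    frob (bsum R S) = frob R + frob S := by
  obtain ⟨hR0, hRfin, hRne⟩ := hR
  obtain ⟨hS0, hSfin, hSne⟩ := hS
  have hRc : Rᶜ ≠ ∅ := hRne.ne_empty
  have hcond : nsCond R = frob R + 1 := by simp [nsCond, hRc]
  have hbdd : BddAbove Rᶜ := hRfin.bddAbove
  have hle : ∀ x ∈ Rᶜ, x ≤ frob R := fun x hx => le_csSup hbdd hx
  have hFmem : frob R ∈ Rᶜ := Nat.sSup_mem hRne hbdd
  have hSbdd : BddAbove Sᶜ := hSfin.bddAbove
  have hSF : frob S ∈ Sᶜ := Nat.sSup_mem hSne hSbdd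
  have hSle : ∀ x ∈ Sᶜ, x ≤ frob S := fun x hx => le_csSup hSbdd hx
  have hS1 : 1 ≤ frob S := by
    rcases Nat.eq_zero_or_pos (frob S) with h | h
    · exact absurd hS0 (by rwa [h] at hSF)
    · exact h
  have hgaps : gaps (bsum R S) = (gaps R \ {frob R}) ∪ ((frob R + ·) '' gaps S) := by
    ext x
    simp only [gaps, bsum, hcond, Set.mem_compl_iff, Set.mem_union, Set.mem_inter_iff,
      Set.mem_Iio, Set.mem_image, Set.mem_diff, Set.mem_singleton_iff, Nat.add_sub_cancel,
      not_or, not_and, not_exists]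
    constructor
    · intro ⟨h1, h2⟩
      rcases lt_trichotomy x (frob R) with hlt | heq | hgt
      · left
        refine ⟨fun hxR => absurd (h1 hxR) (by omega), by omega⟩
      · exfalso
        exact h2 0 hS0 (by omega)
      · right
        refine ⟨x - frob R, fun hxS => h2 (x - frob R) hxS (by omega), by omega⟩
    · rintro (⟨hxR, hxne⟩ | ⟨s, hsS, rfl⟩)
      · have := hle x hxR
        exact ⟨fun hR' _ => hxR hR', fun t ht he => by omega⟩
      · have hs0 : 0 < s := Nat.pos_of_ne_zero (fun h => hsS (h ▸ hS0))
        constructor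
        · intro _ hlt
          omega
        · intro t htS he
          have : t = s := by omega
          exact hsS (this ▸ htS)
  refine ⟨hgaps, ?_⟩
  have heq : (bsum R S)ᶜ = (gaps R \ {frob R}) ∪ ((frob R + ·) '' gaps S) := hgaps
  rw [frob, heq]
  apply le_antisymm
  · apply csSup_le ⟨frob R + frob S, Or.inr ⟨frob S, hSF, rfl⟩⟩
    rintro x (⟨hxR, hxne⟩ | ⟨s, hsS, rfl⟩)
    · have := hle x hxR; omega
    · have := hSle s hsS; simp; omega
  · apply le_csSup
    · refine ⟨frob R + frob S, ?_⟩
      rintro x (⟨hxR, hxne⟩ | ⟨s, hsS, rfl⟩)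
      · have := hle x hxR; omega
      · have := hSle s hsS; simp; omega
    · exact Or.inr ⟨frob S, hSF, rfl⟩
end

section
/- Let R and S be proper numerical sets with gap sets G(R) = {a₁ < ... < a_g} and G(S) = {b₁ < ... < b_k}. Then the end-to-end sum satisfies G(R ⊞_E S) = {a₁, ..., a_g, a_g + b₁ + 1, ..., a_g + b_k + 1} and F(R ⊞_E S) = a_g + b_k + 1. -/
open Set

theorem stmt_7 (R S : Set ℕ) (hR : ProperNumericalSet R) (hS : ProperNumericalSet S) :
    gaps (esum R S) = gaps R ∪ ((fun b => frob R + b + 1) '' gaps S) ∧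
    frob (esum R S) = frob R + frob S + 1 := by
  obtain ⟨hR0, hRfin, hRne⟩ := hR
  obtain ⟨hS0, hSfin, hSne⟩ := hS
  have hcond : nsCond R = frob R + 1 := by
    simp [nsCond, Set.nonempty_iff_ne_empty.mp hRne]
  have hle : ∀ x ∈ Rᶜ, x ≤ frob R := fun x hx => le_csSup hRfin.bddAbove hx
  have hleS : ∀ x ∈ Sᶜ, x ≤ frob S := fun x hx => le_csSup hSfin.bddAbove hx
  have hgaps : gaps (esum R S) = gaps R ∪ ((fun b => frob R + b + 1) '' gaps S) := by
    ext x
    simp only [gaps, esum, hcond, Set.mem_compl_iff, Set.mem_union, Set.mem_inter_iff,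
      Set.mem_Iio, Set.mem_image, not_or, not_and, not_exists]
    constructor
    · intro ⟨h1, h2⟩
      by_cases hx : x ≤ frob R
      · left
        intro hxR
        exact absurd (h1 hxR) (by omega)
      · right
        refine ⟨x - (frob R + 1), ?_, by omega⟩
        intro hmem
        exact h2 (x - (frob R + 1)) hmem (by omega)
    · rintro (h | ⟨b, hb, rfl⟩)
      · have := hle x h
        constructor
        · intro hxR; exact absurd hxR h
        · intro s hs heq; omega
      · constructor
        · intro _; omega
        · intro s hs heq
          have : s = b := by omega
          exact hb (this ▸ hs)
  refine ⟨hgaps, ?_⟩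
  have hFS : frob S ∈ Sᶜ := Nat.sSup_mem hSne hSfin.bddAbove
  have hmem : frob R + frob S + 1 ∈ (esum R S)ᶜ := by
    have : (esum R S)ᶜ = gaps (esum R S) := rfl
    rw [this, hgaps]
    exact Or.inr ⟨frob S, hFS, rfl⟩
  apply le_antisymm
  · apply csSup_le ⟨_, hmem⟩
    intro x hx
    have : x ∈ gaps (esum R S) := hx
    rw [hgaps] at this
    rcases this with h | ⟨b, hb, rfl⟩
    · have := hle x h; omega
    · have := hleS b hb
      have hh : (fun b => frob R + b + 1) b = frob R + b + 1 := rfl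
      omega
  · exact le_csSup ((hRfin.union (hSfin.image _)).subset (by rw [show (esum R S)ᶜ = gaps (esum R S) from rfl, hgaps]; exact subset_rfl)).bddAbove hmem
end

section
/- Let R and S be proper numerical sets with gap sets G(R) = {a₁ < ... < a_g} and G(S) = {b₁ < ... < b_k}. Then the conjoint sum satisfies G(R ⊞_C S) = {a₁, ..., a_g, a_g + b₁, ..., a_g + b_k} and F(R ⊞_C S) = a_g + b_k. -/
open Set

lemma frob_mem_compl (R : Set ℕ) (h : ProperNumericalSet R) : frob R ∈ Rᶜ :=
  Nat.sSup_mem h.2.2 h.2.1.bddAbove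

lemma mem_of_gt_frob (R : Set ℕ) (h : ProperNumericalSet R) {n : ℕ} (hn : frob R < n) :
    n ∈ R := by
  by_contra hc
  exact absurd (le_csSup h.2.1.bddAbove hc) (not_le.mpr hn)

lemma le_frob (R : Set ℕ) (h : ProperNumericalSet R) {n : ℕ} (hn : n ∈ Rᶜ) :
    n ≤ frob R := le_csSup h.2.1.bddAbove hn

theorem stmt_8 (R S : Set ℕ) (hR : ProperNumericalSet R) (hS : ProperNumericalSet S) :
    gaps (csum R S) = gaps R ∪ ((frob R + ·) '' gaps S) ∧
    frob (csum R S) = frob R + frob S := by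
  have hFR : frob R ∉ R := frob_mem_compl R hR
  have hRne : Rᶜ ≠ ∅ := hR.2.2.ne_empty
  have hcond : nsCond R = frob R + 1 := by simp [nsCond, hRne]
  have hgaps : gaps (csum R S) = gaps R ∪ ((frob R + ·) '' gaps S) := by
    ext x
    simp only [gaps, Set.mem_compl_iff, csum, Set.mem_union, Set.mem_image,
      Set.mem_inter_iff, Set.mem_Iio, Set.mem_diff, Set.mem_singleton_iff, hcond]
    constructor
    · intro hx
      by_cases hxR : x ∈ R
      · right
        have hxF : frob R < x := by
          by_contra hle
          push_neg at hle
          exact hx (Or.inl ⟨hxR, by omega⟩)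
        refine ⟨x - frob R, ?_, by omega⟩
        intro hs
        exact hx (Or.inr ⟨x - frob R, ⟨hs, by omega⟩, by omega⟩)
      · exact Or.inl hxR
    · rintro (hx | ⟨b, hb, rfl⟩)
      · rintro (⟨hxR, _⟩ | ⟨s, ⟨hs, hs0⟩, rfl⟩)
        · exact hx hxR
        · exact hx (mem_of_gt_frob R hR (by omega))
      · have hb0 : b ≠ 0 := fun h => hb (h ▸ hS.1)
        rintro (⟨_, hlt⟩ | ⟨s, ⟨hs, hs0⟩, heq⟩)
        · omega
        · have : s = b := by omega
          exact hb (this ▸ hs)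
  refine ⟨hgaps, ?_⟩
  have hFS : frob S ∈ Sᶜ := frob_mem_compl S hS
  have : (csum R S)ᶜ = Rᶜ ∪ ((frob R + ·) '' Sᶜ) := hgaps
  rw [frob, this]
  apply le_antisymm
  · apply csSup_le (by exact ⟨frob R, Or.inl hFR⟩)
    rintro y (hy | ⟨b, hb, rfl⟩)
    · have := le_frob R hR hy; omega
    · have := le_frob S hS hb
      show frob R + b ≤ frob R + frob S
      omega
  · exact le_csSup ((hR.2.1.union (hS.2.1.image _)).bddAbove)
      (Or.inr ⟨frob S, hFS, rfl⟩)
end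

section
/- For proper numerical sets R and S, the dual of the bonded sum satisfies (R ⊞_B S)* = S* ⊞_C R*. -/
open Set

lemma nat_sSup_eq {s : Set ℕ} {a : ℕ} (ha : a ∈ s) (hb : ∀ x ∈ s, x ≤ a) :
    sSup s = a :=
  le_antisymm (csSup_le ⟨a, ha⟩ hb) (le_csSup ⟨a, hb⟩ ha)

theorem stmt_12 (R S : Set ℕ) (hR : ProperNumericalSet R) (hS : ProperNumericalSet S) :
    dual (bsum R S) = csum (dual S) (dual R) := by
  obtain ⟨hR0, hRfin, hRne⟩ := hR
  obtain ⟨hS0, hSfin, hSne⟩ := hS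
  set FR := frob R with hFRdef
  set FS := frob S with hFSdef
  have hFRmem : FR ∉ R := hRne.csSup_mem hRfin
  have hFSmem : FS ∉ S := hSne.csSup_mem hSfin
  have hFRub : ∀ x, x ∉ R → x ≤ FR := fun x hx => le_csSup hRfin.bddAbove hx
  have hFSub : ∀ x, x ∉ S → x ≤ FS := fun x hx => le_csSup hSfin.bddAbove hx
  have hcondR : nsCond R = FR + 1 := by
    rw [nsCond]
    rw [if_neg (by exact fun h => (h ▸ hRne).ne_empty rfl)]
  -- membership in bsum
  have hb1 : ∀ x, x < FR → (x ∈ bsum R S ↔ x ∈ R) := by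
    intro x hx
    constructor
    · rintro (⟨h, _⟩ | ⟨t, _, ht⟩)
      · exact h
      · simp only [hcondR] at ht; omega
    · intro h; exact Or.inl ⟨h, by simp [hcondR]; omega⟩
  have hb2 : ∀ t, (t + FR ∈ bsum R S ↔ t ∈ S) := by
    intro t
    constructor
    · rintro (⟨h, hlt⟩ | ⟨u, hu, hut⟩)
      · simp only [Set.mem_Iio, hcondR] at hlt
        have : t = 0 := by omega
        subst this
        simp at h
        exact absurd h hFRmem
      · simp only [hcondR] at hut
        have : u = t := by omega
        exact this ▸ hu
    · intro h; exact Or.inr ⟨t, h, by simp [hcondR]⟩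
  -- frobenius of bsum
  have hFB : frob (bsum R S) = FR + FS := by
    apply nat_sSup_eq
    · intro h
      rw [add_comm, hb2] at h
      exact hFSmem h
    · intro x hx
      rw [Set.mem_compl_iff] at hx
      rcases lt_or_ge x FR with h | h
      · omega
      · have : x = (x - FR) + FR := by omega
        rw [this, hb2] at hx
        have := hFSub _ hx
        omega
  -- frobenius of dual S
  have hFDS : frob (dual S) = FS := by
    apply nat_sSup_eq
    · intro h
      rw [dual, Set.mem_setOf_eq, ← hFSdef] at h
      rcases h with h | h
      · omega
      · simp at h; exact h hS0
    · intro x hx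
      rw [Set.mem_compl_iff, dual, Set.mem_setOf_eq, ← hFSdef] at hx
      push_neg at hx
      omega
  have hcondDS : nsCond (dual S) = FS + 1 := by
    rw [nsCond, if_neg, hFDS]
    intro h
    have : FS ∈ (dual S)ᶜ := by
      rw [Set.mem_compl_iff, dual, Set.mem_setOf_eq, ← hFSdef]
      push_neg
      exact ⟨le_refl _, by simpa using hS0⟩
    rw [h] at this
    exact this
  -- main extensionality
  ext x
  rw [dual, Set.mem_setOf_eq, hFB, csum, hcondDS]
  simp only [Set.mem_union, Set.mem_inter_iff, Set.mem_Iio, Set.mem_image,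
    Set.mem_diff, Set.mem_singleton_iff, Nat.add_sub_cancel]
  rcases le_or_gt x FS with hx | hx
  · -- case x ≤ FS
    have e1 : ¬ (FR + FS < x) := by omega
    have e2 : FR + FS - x = (FS - x) + FR := by omega
    rw [e2, hb2]
    constructor
    · rintro (h | h)
      · omega
      · exact Or.inl ⟨Or.inr h, by omega⟩
    · rintro (⟨h | h, _⟩ | ⟨y, ⟨hy, hy0⟩, hxy⟩)
      · omega
      · exact Or.inr h
      · rw [dual, Set.mem_setOf_eq, ← hFRdef] at hy; omega
  · -- case x > FS
    set y := x - FS with hy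
    have hxe : x = y + FS := by omega
    have hy1 : 1 ≤ y := by omega
    constructor
    · intro h
      refine Or.inr ⟨y, ⟨?_, by omega⟩, by omega⟩
      rw [dual, Set.mem_setOf_eq, ← hFRdef]
      rcases h with h | h
      · left; omega
      · rcases le_or_gt y FR with hyF | hyF
        · right
          have e3 : FR + FS - x = FR - y := by omega
          rw [e3] at h
          rw [← hb1 (FR - y) (by omega)]
          exact h
        · left; exact hyF
    · rintro (⟨_, h⟩ | ⟨y', ⟨hy', hy'0⟩, hxy⟩)
      · omega
      · rw [dual, Set.mem_setOf_eq, ← hFRdef] at hy'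
        have hyy : y' = y := by omega
        subst hyy
        rcases hy' with h | h
        · left; omega
        · rcases le_or_gt y FR with hyF | hyF
          · right
            have e3 : FR + FS - x = FR - y := by omega
            rw [e3, hb1 (FR - y) (by omega)]
            exact h
          · left; omega
end

section
/- For proper numerical sets R and S, the dual of the end-to-end sum satisfies (R ⊞_E S)* = S* ⊞_E R*. -/
open Set

lemma frob_notMem' {R : Set ℕ} (hf : Rᶜ.Finite) (hne : Rᶜ.Nonempty) : frob R ∉ R :=
  Nat.sSup_mem hne hf.bddAbove

lemma lt_frob_mem' {R : Set ℕ} (hf : Rᶜ.Finite) {x : ℕ} (hx : frob R < x) : x ∈ R := by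
  by_contra hc
  exact absurd (le_csSup hf.bddAbove hc) (not_le.mpr hx)

lemma nsCond_eq' {R : Set ℕ} (h : Rᶜ.Nonempty) : nsCond R = frob R + 1 := by
  unfold nsCond
  rw [if_neg h.ne_empty]

lemma mem_esum' {R : Set ℕ} (S : Set ℕ) (hR : ProperNumericalSet R) (x : ℕ) :
    x ∈ esum R S ↔ (x ≤ frob R ∧ x ∈ R) ∨ (frob R < x ∧ x - (frob R + 1) ∈ S) := by
  rw [esum, nsCond_eq' hR.2.2]
  simp only [Set.mem_union, Set.mem_inter_iff, Set.mem_Iio, Set.mem_image]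
  constructor
  · rintro (⟨h1, h2⟩ | ⟨s, hs, rfl⟩)
    · exact Or.inl ⟨by omega, h1⟩
    · exact Or.inr ⟨by omega, by simpa using hs⟩
  · rintro (⟨h1, h2⟩ | ⟨h1, h2⟩)
    · exact Or.inl ⟨h2, by omega⟩
    · exact Or.inr ⟨x - (frob R + 1), h2, by omega⟩

lemma frob_esum' {R S : Set ℕ} (hR : ProperNumericalSet R) (hS : ProperNumericalSet S) :
    frob (esum R S) = frob R + 1 + frob S := by
  have hub : ∀ x ∈ (esum R S)ᶜ, x ≤ frob R + 1 + frob S := by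
    intro x hx
    rw [Set.mem_compl_iff, mem_esum' S hR] at hx
    push_neg at hx
    rcases le_or_gt x (frob R) with h | h
    · omega
    · have := hx.2 h
      by_contra hc
      exact this (lt_frob_mem' hS.2.1 (by omega))
  have hmem : frob R + 1 + frob S ∈ (esum R S)ᶜ := by
    rw [Set.mem_compl_iff, mem_esum' S hR]
    push_neg
    refine ⟨fun h => absurd h (by omega), fun _ => ?_⟩
    have : frob R + 1 + frob S - (frob R + 1) = frob S := by omega
    rw [this]
    exact frob_notMem' hS.2.1 hS.2.2
  exact le_antisymm (csSup_le ⟨_, hmem⟩ hub) (le_csSup ⟨_, hub⟩ hmem)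

lemma dual_compl' {S : Set ℕ} :
    (dual S)ᶜ = {x | x ≤ frob S ∧ frob S - x ∈ S} := by
  ext x
  simp only [Set.mem_compl_iff, dual, Set.mem_setOf_eq, not_or, not_not, not_lt]

lemma frob_dual' {S : Set ℕ} (hS : ProperNumericalSet S) : frob (dual S) = frob S := by
  have hmem : frob S ∈ (dual S)ᶜ := by
    rw [dual_compl']
    exact ⟨le_refl _, by simpa using hS.1⟩
  have hub : ∀ x ∈ (dual S)ᶜ, x ≤ frob S := by
    intro x hx; rw [dual_compl'] at hx; exact hx.1
  exact le_antisymm (csSup_le ⟨_, hmem⟩ hub) (le_csSup ⟨_, hub⟩ hmem)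

lemma dual_proper' {S : Set ℕ} (hS : ProperNumericalSet S) : ProperNumericalSet (dual S) := by
  have hmem : frob S ∈ (dual S)ᶜ := by
    rw [dual_compl']
    exact ⟨le_refl _, by simpa using hS.1⟩
  refine ⟨Or.inr (by simpa using frob_notMem' hS.2.1 hS.2.2), ?_, ⟨_, hmem⟩⟩
  · apply Set.Finite.subset (Set.finite_Iic (frob S))
    intro x hx; rw [dual_compl'] at hx; exact hx.1
theorem stmt_13 (R S : Set ℕ) (hR : ProperNumericalSet R) (hS : ProperNumericalSet S) :
    dual (esum R S) = esum (dual S) (dual R) := by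
  ext x
  rw [dual, Set.mem_setOf_eq, frob_esum' hR hS,
      mem_esum' (dual R) (dual_proper' hS), frob_dual' hS, mem_esum' S hR]
  simp only [dual, Set.mem_setOf_eq]
  rcases le_or_gt x (frob S) with h1 | h1
  · -- x ≤ F2
    have e1 : frob R + 1 + frob S - x - (frob R + 1) = frob S - x := by omega
    rw [e1]
    have a1 : ¬(frob R + 1 + frob S < x) := by omega
    have a2 : frob R < frob R + 1 + frob S - x := by omega
    have a3 : ¬(frob R + 1 + frob S - x ≤ frob R) := by omega
    have a4 : ¬(frob S < x) := by omega
    tauto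
  · rcases le_or_gt x (frob R + 1 + frob S) with h2 | h2
    · -- F2 < x ≤ F1+1+F2
      have e2 : frob R - (x - (frob S + 1)) = frob R + 1 + frob S - x := by omega
      rw [e2]
      have a1 : ¬(frob R + 1 + frob S < x) := by omega
      have a2 : frob R + 1 + frob S - x ≤ frob R := by omega
      have a3 : ¬(frob R < frob R + 1 + frob S - x) := by omega
      have a4 : frob S < x := h1
      have a5 : ¬(frob R < x - (frob S + 1)) := by omega
      have a6 : ¬(x ≤ frob S) := by omega
      tauto
    · -- x > F1+1+F2
      exact ⟨fun _ => Or.inr ⟨by omega, Or.inl (by omega)⟩, fun _ => Or.inl h2⟩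
end

section
/- For any proper numerical sets R and S, R ⊞_E S = R ⊞_C {0, 2, →} ⊞_B S. -/
open Set

theorem stmt_15 (R S : Set ℕ) (hR : ProperNumericalSet R) (hS : ProperNumericalSet S) :
    esum R S = bsum (csum R ({0} ∪ Set.Ici 2)) S := by
  obtain ⟨h0, hfin, hne⟩ := hR
  have hcompl : Rᶜ ≠ ∅ := hne.ne_empty
  set F := frob R with hF
  have hc : nsCond R = F + 1 := by simp [nsCond, hcompl, hF]
  set Q := csum R ({0} ∪ Set.Ici 2) with hQdef
  have hT : ({0} ∪ Set.Ici 2 : Set ℕ) \ {0} = Set.Ici 2 := by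
    ext x; simp
  have hQ : Q = (R ∩ Iio (F+1)) ∪ Ici (F+2) := by
    rw [hQdef, csum, hT, hc]
    congr 1
    ext x
    simp only [Set.mem_image, Set.mem_Ici, Nat.add_sub_cancel]
    constructor
    · rintro ⟨y, hy, rfl⟩; omega
    · intro hx; exact ⟨x - F, by omega, by omega⟩
  have hmem : ∀ x, x ∈ Q ↔ (x ∈ R ∧ x < F + 1) ∨ F + 2 ≤ x := by
    intro x; rw [hQ]; simp
  have hub : ∀ x ∈ Qᶜ, x ≤ F + 1 := by
    intro x hx
    by_contra h
    exact hx ((hmem x).2 (Or.inr (by omega)))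
  have hF1 : F + 1 ∈ Qᶜ := by
    intro h
    rcases (hmem _).1 h with ⟨_, h2⟩ | h2 <;> omega
  have hQne : Qᶜ ≠ ∅ := Set.nonempty_iff_ne_empty.1 ⟨F+1, hF1⟩
  have hfrobQ : frob Q = F + 1 := by
    apply le_antisymm
    · exact csSup_le ⟨F+1, hF1⟩ hub
    · exact le_csSup ⟨F+1, hub⟩ hF1
  have hcQ : nsCond Q = F + 2 := by simp [nsCond, hQne, hfrobQ]
  ext x
  rw [esum, bsum, hcQ, hc]
  simp only [Set.mem_union, Set.mem_inter_iff, Set.mem_Iio, hmem, Nat.add_sub_cancel]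
  constructor
  · rintro (⟨h1, h2⟩ | h)
    · exact Or.inl ⟨Or.inl ⟨h1, h2⟩, by omega⟩
    · exact Or.inr h
  · rintro (⟨h1 | h1, h2⟩ | h)
    · exact Or.inl h1
    · omega
    · exact Or.inr h
end

section
/- For any proper numerical set S, the numerical set S ⊞_C {0,2,→} ⊞_B S* is symmetric. -/
open Set

theorem stmt_16 (S : Set ℕ) (hS : ProperNumericalSet S) :
    IsSymmetric (bsum (csum S ({0} ∪ Set.Ici 2)) (dual S)) := by
  obtain ⟨h0, hfin, hne⟩ := hS
  set F := frob S with hF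
  have hbdd : BddAbove Sᶜ := hfin.bddAbove
  have hFmem : F ∉ S := Nat.sSup_mem hne hbdd
  have hle : ∀ x, x ∉ S → x ≤ F := fun x hx => le_csSup hbdd hx
  have hbig : ∀ x, F < x → x ∈ S := fun x hx => by
    by_contra h; exact absurd (hle x h) (not_le.2 hx)
  have hcS : nsCond S = F + 1 := by
    unfold nsCond
    rw [if_neg (Set.nonempty_iff_ne_empty.mp hne)]
  set A := csum S ({0} ∪ Set.Ici 2) with hAdef
  have hA : ∀ x, x ∈ A ↔ (x ≤ F ∧ x ∈ S) ∨ F + 2 ≤ x := by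
    intro x
    rw [hAdef]
    unfold csum
    rw [hcS]
    simp only [Set.mem_union, Set.mem_inter_iff, Set.mem_Iio,
      Set.mem_image, Set.mem_diff, Set.mem_union, Set.mem_singleton_iff, Set.mem_Ici]
    constructor
    · rintro (⟨hx, hlt⟩ | ⟨y, ⟨(hy | hy), hy0⟩, rfl⟩)
      · exact Or.inl ⟨by omega, hx⟩
      · omega
      · right; omega
    · rintro (⟨hx, hxS⟩ | hx)
      · exact Or.inl ⟨hxS, by omega⟩
      · exact Or.inr ⟨x - F, ⟨Or.inr (by omega), by omega⟩, by omega⟩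
  have hAne : F + 1 ∉ A := by rw [hA]; omega
  have hAub : ∀ x, x ∉ A → x ≤ F + 1 := by
    intro x hx
    by_contra h
    exact hx ((hA x).mpr (Or.inr (by omega)))
  have hfrobA : frob A = F + 1 := by
    apply le_antisymm
    · exact csSup_le ⟨F + 1, hAne⟩ fun x hx => hAub x hx
    · exact le_csSup ⟨F + 1, fun x hx => hAub x hx⟩ hAne
  have hcA : nsCond A = F + 2 := by
    unfold nsCond
    rw [if_neg (Set.nonempty_iff_ne_empty.mp ⟨F + 1, hAne⟩), hfrobA]
  set B := bsum A (dual S) with hBdef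
  have hdual : ∀ d, d ∈ dual S ↔ F < d ∨ F - d ∉ S := fun d => Iff.rfl
  have hB : ∀ x, x ∈ B ↔ (x ≤ F ∧ x ∈ S) ∨ ∃ d, (F < d ∨ F - d ∉ S) ∧ d + (F + 1) = x := by
    intro x
    rw [hBdef]
    unfold bsum
    rw [hcA]
    simp only [Set.mem_union, Set.mem_inter_iff, Set.mem_Iio, Set.mem_image]
    constructor
    · rintro (⟨hx, hlt⟩ | ⟨d, hd, rfl⟩)
      · rcases (hA x).mp hx with ⟨h1, h2⟩ | h1
        · exact Or.inl ⟨h1, h2⟩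
        · omega
      · exact Or.inr ⟨d, (hdual d).mp hd, by omega⟩
    · rintro (⟨hx, hxS⟩ | ⟨d, hd, rfl⟩)
      · exact Or.inl ⟨(hA x).mpr (Or.inl ⟨hx, hxS⟩), by omega⟩
      · exact Or.inr ⟨d, (hdual d).mpr hd, by omega⟩
  have hBne : 2 * F + 1 ∉ B := by
    rw [hB]
    rintro (⟨h1, _⟩ | ⟨d, hd, hd2⟩)
    · omega
    · have : d = F := by omega
      subst this
      rcases hd with h | h
      · omega
      · exact h (by simpa using h0)
  have hBub : ∀ x, x ∉ B → x ≤ 2 * F + 1 := by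
    intro x hx
    by_contra h
    exact hx ((hB x).mpr (Or.inr ⟨x - (F + 1), Or.inl (by omega), by omega⟩))
  have hfrobB : frob B = 2 * F + 1 := by
    apply le_antisymm
    · exact csSup_le ⟨2 * F + 1, hBne⟩ fun x hx => hBub x hx
    · exact le_csSup ⟨2 * F + 1, fun x hx => hBub x hx⟩ hBne
  intro a ha
  rw [hfrobB] at ha ⊢
  rw [hB, hB]
  by_cases hcase : a ≤ F
  · constructor
    · rintro (⟨_, haS⟩ | ⟨d, _, hd2⟩)
      · rintro (⟨h1, _⟩ | ⟨d, hd, hd2⟩)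
        · omega
        · have : d = F - a := by omega
          subst this
          rcases hd with h | h
          · omega
          · exact h (by simpa [show F - (F - a) = a by omega] using haS)
      · omega
    · intro hnb
      left
      refine ⟨hcase, ?_⟩
      by_contra haS
      exact hnb (Or.inr ⟨F - a, Or.inr (by simpa [show F - (F - a) = a by omega] using haS), by omega⟩)
  · -- a ≥ F + 1, b := 2F+1-a ≤ F
    constructor
    · rintro (⟨h1, _⟩ | ⟨d, hd, hd2⟩)
      · omega
      · rintro (⟨_, hbS⟩ | ⟨d', _, hd2'⟩)
        · rcases hd with h | h
          · omega
          · exact h (by simpa [show F - d = 2 * F + 1 - a by omega] using hbS)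
        · omega
    · intro hnb
      refine Or.inr ⟨a - (F + 1), Or.inr ?_, by omega⟩
      intro hmem
      exact hnb (Or.inl ⟨by omega, by simpa [show F - (a - (F + 1)) = 2 * F + 1 - a by omega] using hmem⟩)
end
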